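/- Let S be a subset of {1,2,3,...} × {1,2,3,...} that is closed under componentwise addition. Suppose (a_{i,j})_{i,j≥1} and (b_{i,j})_{i,j≥1} are families of integers related by the identity 1 + Σ_{i,j≥1} a_{i,j} U^i T^j = Π_{i,j≥1} (1 − U^i T^j)^{b_{i,j}} of formal power series in ℤ⟦U,T⟧ (the product understood coefficientwise: for all m, n ≥ 1 the coefficient of U^m T^n of the left side equals that of Π_{1≤i≤m, 1≤j≤n}(1 − U^i T^j)^{b_{i,j}}). Then a_{i,j} = 0 for all (i,j) ∉ S if and only if b_{i,j} = 0 for all (i,j) ∉ S. -/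

import Mathlib

/-- Integer power of an element of a monoid with zero: for units this agrees with
the `zpow` in the unit group; negative exponents use `Ring.inverse`. -/
noncomputable def ringZpow {R : Type*} [MonoidWithZero R] (f : R) (n : ℤ) : R :=
  if 0 ≤ n then f ^ n.toNat else Ring.inverse f ^ (-n).toNat

/-- The coefficient of `U^m T^n` in `ℤ⟦U,T⟧ = MvPowerSeries (Fin 2) ℤ`, `U = X 0`, `T = X 1`. -/
noncomputable def coeffUT (m n : ℕ) : MvPowerSeries (Fin 2) ℤ →ₗ[ℤ] ℤ :=
  MvPowerSeries.coeff (Finsupp.single (0 : Fin 2) m + Finsupp.single (1 : Fin 2) n)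

/-!
Let `M` be the additive monoid of exponents generated by `S`; as `S` is closed under addition,
the exponent of `U^m T^n` (`m ≥ 1`) lies in `M` exactly when `(m, n) ∈ S`. Power series supported
in `M` form a subring closed under inversion. If `b` vanishes off `S`, every factor
`(1 - U^i T^j)^{b i j}` is supported in `M`, hence so is the product, and `a` vanishes off `S`.
Conversely, by induction on `(m, n)`, all factors of the product other than the `(m, n)` one are
supported in `M`, which forces `a m n = -b m n`.
-/

theorem AddSubmonoid.mem_closure_iff_of_add_mem {A : Type*} [AddMonoid A] {S : Set A}
    (hS : ∀ p ∈ S, ∀ q ∈ S, p + q ∈ S) {p : A} : p ∈ closure S ↔ p = 0 ∨ p ∈ S := by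
  refine ⟨fun hp => ?_, by rintro (rfl | hp); exacts [zero_mem _, subset_closure hp]⟩
  induction hp using closure_induction with
  | mem p hp => exact Or.inr hp
  | zero => exact Or.inl rfl
  | add p q _ _ hp hq =>
    rcases hp with rfl | hp
    · rwa [zero_add]
    rcases hq with rfl | hq
    · rw [add_zero]; exact Or.inr hp
    · exact Or.inr (hS p hp q hq)

namespace MvPowerSeries

open Finset.HasAntidiagonal

variable {σ R : Type*} [CommRing R]

def supportedIn (M : AddSubmonoid (σ →₀ ℕ)) : Subring (MvPowerSeries σ R) where
  carrier := {f | ∀ d, coeff d f ≠ 0 → d ∈ M}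
  one_mem' d hd := by
    classical
    rw [coeff_one] at hd
    by_cases h : d = 0
    · exact h ▸ M.zero_mem
    · exact absurd (if_neg h) hd
  mul_mem' {f g} hf hg d hd := by
    classical
    rw [coeff_mul] at hd
    obtain ⟨⟨p, q⟩, hpq, hne⟩ := Finset.exists_ne_zero_of_sum_ne_zero hd
    rw [mem_antidiagonal] at hpq
    exact hpq ▸ M.add_mem (hf p (left_ne_zero_of_mul hne)) (hg q (right_ne_zero_of_mul hne))
  zero_mem' d hd := absurd (map_zero _) hd
  add_mem' {f g} hf hg d hd := by
    rw [map_add] at hd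
    by_cases hfd : coeff d f = 0
    · exact hg d (by simpa [hfd] using hd)
    · exact hf d hfd
  neg_mem' {f} hf d hd := hf d (by simpa using hd)

variable {M : AddSubmonoid (σ →₀ ℕ)} {f g : MvPowerSeries σ R}

theorem coeff_eq_zero_of_mem_supportedIn (hf : f ∈ supportedIn M) {d : σ →₀ ℕ} (hd : d ∉ M) :
    coeff d f = 0 :=
  not_imp_comm.mp (hf d) hd

theorem monomial_mem_supportedIn {d : σ →₀ ℕ} (hd : d ∈ M) (c : R) :
    monomial d c ∈ supportedIn M := by
  classical
  intro d' hd'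
  rw [coeff_monomial] at hd'
  by_cases h : d' = d
  · exact h ▸ hd
  · exact absurd (if_neg h) hd'

/-- The coefficient of `d` in `f * g = 1` expresses `coeff d g` through coefficients of `g` at
exponents `q < d` with `d - q ∈ M`, so well-founded induction on `d` applies. -/
theorem mem_supportedIn_of_mul_eq_one (hf : f ∈ supportedIn M) (hfg : f * g = 1) :
    g ∈ supportedIn M := by
  classical
  have hunit : IsUnit (constantCoeff f) :=
    IsUnit.of_mul_eq_one (constantCoeff g) (by rw [← map_mul, hfg, map_one])
  intro d
  induction d using WellFoundedLT.induction with
  | _ d ih =>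
    intro hd
    by_cases hd0 : d = 0
    · exact hd0 ▸ M.zero_mem
    have hsum : ∑ pq ∈ antidiagonal d, coeff pq.1 f * coeff pq.2 g = 0 := by
      rw [← coeff_mul, hfg, coeff_one, if_neg hd0]
    have h0d : ((0 : σ →₀ ℕ), d) ∈ antidiagonal d := mem_antidiagonal.mpr (zero_add d)
    rw [← Finset.add_sum_erase _ _ h0d, coeff_zero_eq_constantCoeff_apply] at hsum
    have hrest : ∑ pq ∈ (antidiagonal d).erase (0, d), coeff pq.1 f * coeff pq.2 g ≠ 0 := by
      intro h
      rw [h, add_zero] at hsum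
      exact hd ((hunit.mul_right_eq_zero).mp hsum)
    obtain ⟨⟨p, q⟩, hpq, hne⟩ := Finset.exists_ne_zero_of_sum_ne_zero hrest
    rw [Finset.mem_erase, mem_antidiagonal] at hpq
    have hp : p ≠ 0 := by
      rintro rfl
      exact hpq.1 (by rw [← hpq.2, zero_add])
    have hqd : q < d := hpq.2 ▸ lt_add_of_pos_left q (pos_iff_ne_zero.mpr hp)
    exact hpq.2 ▸ M.add_mem (hf p (left_ne_zero_of_mul hne)) (ih q hqd (right_ne_zero_of_mul hne))

theorem inverse_mem_supportedIn (hf : f ∈ supportedIn M) : Ring.inverse f ∈ supportedIn M := by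
  by_cases hu : IsUnit f
  · exact mem_supportedIn_of_mul_eq_one hf (Ring.mul_inverse_cancel f hu)
  · rw [Ring.inverse_non_unit f hu]
    exact Subring.zero_mem _

theorem ringZpow_mem_supportedIn (hf : f ∈ supportedIn M) (n : ℤ) :
    ringZpow f n ∈ supportedIn M := by
  unfold ringZpow
  split
  · exact Subring.pow_mem _ hf _
  · exact Subring.pow_mem _ (inverse_mem_supportedIn hf) _

theorem isUnit_of_constantCoeff_eq_one (hg0 : constantCoeff g = 1) : IsUnit g :=
  isUnit_iff_constantCoeff.mpr (hg0 ▸ isUnit_one)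

theorem constantCoeff_inverse_of_constantCoeff_eq_one (hg0 : constantCoeff g = 1) :
    constantCoeff (Ring.inverse g) = 1 := by
  have h := congrArg constantCoeff (Ring.mul_inverse_cancel g (isUnit_of_constantCoeff_eq_one hg0))
  rwa [map_mul, hg0, one_mul, map_one] at h

theorem constantCoeff_ringZpow_of_constantCoeff_eq_one (hg0 : constantCoeff g = 1) (n : ℤ) :
    constantCoeff (ringZpow g n) = 1 := by
  unfold ringZpow
  split_ifs
  · rw [map_pow, hg0, one_pow]
  · rw [map_pow, constantCoeff_inverse_of_constantCoeff_eq_one hg0, one_pow]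

section ClosureSingleton

variable {e : σ →₀ ℕ}

/-- Only the exponents `0` and `e` of a series supported on `ℕ • e` lie below `e`. -/
theorem coeff_mul_of_mem_supportedIn_closure_singleton (he : e ≠ 0)
    (hg : g ∈ supportedIn (AddSubmonoid.closure {e})) (h : MvPowerSeries σ R) :
    coeff e (g * h) = constantCoeff g * coeff e h + coeff e g * constantCoeff h := by
  classical
  rw [coeff_mul, ← coeff_zero_eq_constantCoeff_apply, ← coeff_zero_eq_constantCoeff_apply]
  refine Finset.sum_eq_add ((0 : σ →₀ ℕ), e) (e, 0) (fun h0 => he (congrArg Prod.fst h0).symm)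
    ?_ (fun h0 => absurd (by simp) h0) (fun h0 => absurd (by simp) h0)
  rintro ⟨p, q⟩ hpq ⟨h0, h1⟩
  rw [mem_antidiagonal] at hpq
  dsimp only at hpq ⊢
  by_contra hne
  obtain ⟨k, rfl⟩ := AddSubmonoid.mem_closure_singleton.mp (hg p (left_ne_zero_of_mul hne))
  match k with
  | 0 =>
    rw [zero_smul, zero_add] at hpq
    exact h0 (by rw [hpq, zero_smul])
  | 1 =>
    rw [one_smul, add_eq_left] at hpq
    exact h1 (by rw [hpq, one_smul])
  | k + 2 =>
    have : e + e ≤ e := calc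
      e + e ≤ (k + 2) • e := by rw [add_smul, two_smul]; exact le_add_self
      _ ≤ (k + 2) • e + q := le_self_add
      _ = e := hpq
    exact he (le_zero_iff.mp ((add_le_iff_nonpos_right e).mp this))

theorem coeff_pow_of_mem_supportedIn_closure_singleton (he : e ≠ 0)
    (hg : g ∈ supportedIn (AddSubmonoid.closure {e})) (hg0 : constantCoeff g = 1) (k : ℕ) :
    coeff e (g ^ k) = k * coeff e g := by
  classical
  induction k with
  | zero => rw [pow_zero, coeff_one, if_neg he, Nat.cast_zero, zero_mul]
  | succ k ih =>
    rw [pow_succ, mul_comm, coeff_mul_of_mem_supportedIn_closure_singleton he hg, hg0, ih,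
      map_pow, hg0]
    push_cast
    ring

theorem coeff_inverse_of_mem_supportedIn_closure_singleton (he : e ≠ 0)
    (hg : g ∈ supportedIn (AddSubmonoid.closure {e})) (hg0 : constantCoeff g = 1) :
    coeff e (Ring.inverse g) = -coeff e g := by
  classical
  have h := congrArg (coeff e) (Ring.mul_inverse_cancel g (isUnit_of_constantCoeff_eq_one hg0))
  rw [coeff_mul_of_mem_supportedIn_closure_singleton he hg, hg0,
    constantCoeff_inverse_of_constantCoeff_eq_one hg0, coeff_one, if_neg he] at h
  linear_combination h

theorem coeff_ringZpow_of_mem_supportedIn_closure_singleton (he : e ≠ 0)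
    (hg : g ∈ supportedIn (AddSubmonoid.closure {e})) (hg0 : constantCoeff g = 1) (n : ℤ) :
    coeff e (ringZpow g n) = n * coeff e g := by
  unfold ringZpow
  split_ifs with hn
  · rw [coeff_pow_of_mem_supportedIn_closure_singleton he hg hg0, ← Int.cast_natCast,
      Int.toNat_of_nonneg hn]
  · rw [coeff_pow_of_mem_supportedIn_closure_singleton he (inverse_mem_supportedIn hg)
      (constantCoeff_inverse_of_constantCoeff_eq_one hg0),
      coeff_inverse_of_mem_supportedIn_closure_singleton he hg hg0, ← Int.cast_natCast,
      Int.toNat_of_nonneg (by omega), Int.cast_neg, neg_mul_neg]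

end ClosureSingleton

variable {e : σ →₀ ℕ}

theorem coeff_mul_of_notMem_of_mem_supportedIn {g h : MvPowerSeries σ R} (he : e ∉ M)
    (hg : g ∈ supportedIn (AddSubmonoid.closure {e})) (hh : h ∈ supportedIn M)
    (hh0 : constantCoeff h = 1) : coeff e (g * h) = coeff e g := by
  rw [coeff_mul_of_mem_supportedIn_closure_singleton (ne_of_mem_of_not_mem M.zero_mem he).symm hg,
    coeff_eq_zero_of_mem_supportedIn hh he, hh0, mul_zero, zero_add, mul_one]

theorem constantCoeff_one_sub_monomial (he : e ≠ 0) (c : R) :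
    constantCoeff (1 - monomial e c) = 1 := by
  classical
  rw [map_sub, map_one, ← coeff_zero_eq_constantCoeff_apply, coeff_monomial, if_neg he.symm,
    sub_zero]

theorem coeff_ringZpow_one_sub_monomial (he : e ≠ 0) (n : ℤ) :
    coeff e (ringZpow (1 - monomial e 1 : MvPowerSeries σ R) n) = -n := by
  classical
  rw [coeff_ringZpow_of_mem_supportedIn_closure_singleton he
    (Subring.sub_mem _ (Subring.one_mem _)
      (monomial_mem_supportedIn (AddSubmonoid.subset_closure (Set.mem_singleton e)) 1))
    (constantCoeff_one_sub_monomial he 1), map_sub, coeff_one, if_neg he, coeff_monomial_same]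
  ring

end MvPowerSeries

open MvPowerSeries

noncomputable def bidegree : ℕ × ℕ →+ (Fin 2 →₀ ℕ) :=
  (Finsupp.singleAddHom 0).coprod (Finsupp.singleAddHom 1)

theorem bidegree_injective : Function.Injective bidegree := by
  rintro ⟨i, j⟩ ⟨i', j'⟩ h
  simpa [bidegree] using And.intro (congrArg (· 0) h) (congrArg (· 1) h)

theorem coeffUT_apply (m n : ℕ) (f : MvPowerSeries (Fin 2) ℤ) :
    coeffUT m n f = coeff (bidegree (m, n)) f :=
  rfl

theorem X_pow_mul_X_pow_eq_monomial_bidegree {R : Type*} [CommRing R] (i j : ℕ) :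
    (X 0 : MvPowerSeries (Fin 2) R) ^ i * X 1 ^ j = monomial (bidegree (i, j)) 1 := by
  rw [X_pow_eq, X_pow_eq, monomial_mul_monomial, one_mul]
  rfl

theorem bidegree_notMem_map_closure {S : Set (ℕ × ℕ)} (hS : ∀ p ∈ S, ∀ q ∈ S, p + q ∈ S)
    {m n : ℕ} (hm : 1 ≤ m) (hmn : (m, n) ∉ S) :
    bidegree (m, n) ∉ (AddSubmonoid.closure S).map bidegree := by
  rw [AddSubmonoid.mem_map_iff_mem bidegree_injective, AddSubmonoid.mem_closure_iff_of_add_mem hS,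
    not_or]
  exact ⟨by simp; omega, hmn⟩

theorem ringZpow_one_sub_X_pow_mul_X_pow_mem_supportedIn {M : AddSubmonoid (Fin 2 →₀ ℕ)}
    {i j : ℕ} {c : ℤ} (h : bidegree (i, j) ∈ M ∨ c = 0) :
    ringZpow (1 - X 0 ^ i * X 1 ^ j : MvPowerSeries (Fin 2) ℤ) c ∈ supportedIn M := by
  rcases h with h | rfl
  · rw [X_pow_mul_X_pow_eq_monomial_bidegree]
    exact ringZpow_mem_supportedIn
      (Subring.sub_mem _ (Subring.one_mem _) (monomial_mem_supportedIn h 1)) c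
  · simp [ringZpow]

/-- All factors other than `(m, n)` are supported in `M`, which misses `U^m T^n`, so only the
linear term `-b m n • U^m T^n` of the `(m, n)` factor reaches the coefficient of `U^m T^n`. -/
theorem coeffUT_prod_ringZpow_one_sub {M : AddSubmonoid (Fin 2 →₀ ℕ)} {m n : ℕ}
    (hm : 1 ≤ m) (hn : 1 ≤ n) (hM : bidegree (m, n) ∉ M) (b : ℕ → ℕ → ℤ)
    (hrest : ∀ p ∈ (Finset.Icc 1 m ×ˢ Finset.Icc 1 n).erase (m, n),
      ringZpow (1 - X 0 ^ p.1 * X 1 ^ p.2 : MvPowerSeries (Fin 2) ℤ) (b p.1 p.2) ∈ supportedIn M) :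
    coeffUT m n (∏ i ∈ Finset.Icc 1 m, ∏ j ∈ Finset.Icc 1 n,
      ringZpow (1 - X 0 ^ i * X 1 ^ j : MvPowerSeries (Fin 2) ℤ) (b i j)) = -b m n := by
  have hmn : (m, n) ∈ Finset.Icc 1 m ×ˢ Finset.Icc 1 n := by simp [hm, hn]
  have hconst : ∀ p ∈ (Finset.Icc 1 m ×ˢ Finset.Icc 1 n).erase (m, n),
      constantCoeff (ringZpow (1 - X 0 ^ p.1 * X 1 ^ p.2 : MvPowerSeries (Fin 2) ℤ)
        (b p.1 p.2)) = 1 := by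
    intro p hp
    have hp0 : bidegree p ≠ 0 := by
      rw [map_ne_zero_iff _ bidegree_injective]
      rintro rfl
      simp at hp
    exact constantCoeff_ringZpow_of_constantCoeff_eq_one
      (by rw [X_pow_mul_X_pow_eq_monomial_bidegree, constantCoeff_one_sub_monomial hp0]) _
  rw [← Finset.prod_product', ← Finset.mul_prod_erase _ _ hmn, coeffUT_apply]
  dsimp only
  rw [coeff_mul_of_notMem_of_mem_supportedIn hM
      (ringZpow_one_sub_X_pow_mul_X_pow_mem_supportedIn
        (Or.inl (AddSubmonoid.subset_closure (Set.mem_singleton _))))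
      (Subring.prod_mem _ hrest) (by rw [map_prod]; exact Finset.prod_eq_one hconst),
    X_pow_mul_X_pow_eq_monomial_bidegree,
    coeff_ringZpow_one_sub_monomial ((map_ne_zero_iff _ bidegree_injective).mpr (by simp; omega)),
    Int.cast_id]

theorem statement5_general (S : Set (ℕ × ℕ))
    (hSadd : ∀ p ∈ S, ∀ q ∈ S, p + q ∈ S)
    (a b : ℕ → ℕ → ℤ)
    (hab : ∀ m n : ℕ, 1 ≤ m → 1 ≤ n →
      a m n =
        coeffUT m n
          (∏ i ∈ Finset.Icc 1 m, ∏ j ∈ Finset.Icc 1 n,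
            ringZpow (1 - MvPowerSeries.X (0 : Fin 2) ^ i * MvPowerSeries.X (1 : Fin 2) ^ j)
              (b i j))) :
    (∀ i j : ℕ, 1 ≤ i → 1 ≤ j → (i, j) ∉ S → a i j = 0) ↔
    (∀ i j : ℕ, 1 ≤ i → 1 ≤ j → (i, j) ∉ S → b i j = 0) := by
  set M := (AddSubmonoid.closure S).map bidegree
  have hfactor : ∀ i j, (i, j) ∈ S ∨ b i j = 0 →
      ringZpow (1 - X 0 ^ i * X 1 ^ j : MvPowerSeries (Fin 2) ℤ) (b i j) ∈ supportedIn M :=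
    fun i j h => ringZpow_one_sub_X_pow_mul_X_pow_mem_supportedIn
      (h.imp_left fun h => AddSubmonoid.mem_map_of_mem _ (AddSubmonoid.subset_closure h))
  constructor
  · intro ha
    suffices h : ∀ p : ℕ × ℕ, 1 ≤ p.1 → 1 ≤ p.2 → p ∉ S → b p.1 p.2 = 0 from
      fun i j => h (i, j)
    intro p
    induction p using WellFoundedLT.induction with
    | _ p ih =>
      obtain ⟨m, n⟩ := p
      intro hm hn hmn
      have hcoeff := coeffUT_prod_ringZpow_one_sub hm hn
        (bidegree_notMem_map_closure hSadd hm hmn) b fun q hq => by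
          obtain ⟨hqmn, hq⟩ := Finset.mem_erase.mp hq
          simp only [Finset.mem_product, Finset.mem_Icc] at hq
          exact hfactor _ _ (or_iff_not_imp_left.mpr fun hqS =>
            ih q (lt_of_le_of_ne ⟨hq.1.2, hq.2.2⟩ hqmn) hq.1.1 hq.2.1 hqS)
      rw [← hab m n hm hn, ha m n hm hn hmn] at hcoeff
      exact neg_eq_zero.mp hcoeff.symm
  · intro hb m n hm hn hmn
    rw [hab m n hm hn, coeffUT_apply]
    exact coeff_eq_zero_of_mem_supportedIn
      (Subring.prod_mem _ fun i hi => Subring.prod_mem _ fun j hj => hfactor i j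
        (or_iff_not_imp_left.mpr (hb i j (Finset.mem_Icc.mp hi).1 (Finset.mem_Icc.mp hj).1)))
      (bidegree_notMem_map_closure hSadd hm hmn)

/-- Lemma 4.3 (SubsetLemma): let `S ⊆ {1,2,…} × {1,2,…}` be closed under componentwise addition,
and suppose the integer families `(a_{i,j})` and `(b_{i,j})` (for `i, j ≥ 1`) satisfy
`1 + Σ a_{i,j} U^i T^j = ∏_{i,j ≥ 1} (1 - U^i T^j)^{b_{i,j}}` coefficientwise.
Then `a_{i,j} = 0` for all `(i,j) ∉ S` if and only if `b_{i,j} = 0` for all `(i,j) ∉ S`. -/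
theorem statement5 (S : Set (ℕ × ℕ))
    (hS1 : ∀ p ∈ S, 1 ≤ p.1 ∧ 1 ≤ p.2)
    (hSadd : ∀ p ∈ S, ∀ q ∈ S, p + q ∈ S)
    (a b : ℕ → ℕ → ℤ)
    (hab : ∀ m n : ℕ, 1 ≤ m → 1 ≤ n →
      a m n =
        coeffUT m n
          (∏ i ∈ Finset.Icc 1 m, ∏ j ∈ Finset.Icc 1 n,
            ringZpow (1 - MvPowerSeries.X (0 : Fin 2) ^ i * MvPowerSeries.X (1 : Fin 2) ^ j)
              (b i j))) :
    (∀ i j : ℕ, 1 ≤ i → 1 ≤ j → (i, j) ∉ S → a i j = 0) ↔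
    (∀ i j : ℕ, 1 ≤ i → 1 ≤ j → (i, j) ∉ S → b i j = 0) :=
  statement5_general S hSadd a b hab
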